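/- If λ₁, λ₂ ∈ ℝ, f₁ ∈ S_st^{λ₁}, f₂ ∈ S_st^{λ₂} and 𝔼[f₁(0,·)] = 𝔼[f₂(0,·)], then λ₁ = λ₂ and ℙ(f₁(x,ω) = f₂(x,ω) for all x ∈ ℝ) = 1. In particular, for every θ ∈ E there is a unique λ(θ) ∈ ℝ such that some f ∈ S_st^{λ(θ)} has 𝔼[f(0,·)] = θ, and this f is unique up to ℙ-null sets. -/

import Mathlib

open MeasureTheory Filter Set

structure HJSetting {Ω : Type} [MeasurableSpace Ω] (P : Measure Ω) (τ : ℝ → Ω → Ω)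
    (a : ℝ → Ω → ℝ) (H : ℝ → ℝ → Ω → ℝ) (G_L G_U : ℝ → ℝ) : Prop where
  prob : IsProbabilityMeasure P
  meas_tau : Measurable fun q : ℝ × Ω => τ q.1 q.2
  mp_tau : ∀ x, MeasurePreserving (τ x) P P
  tau_zero : ∀ ω, τ 0 ω = ω
  tau_add : ∀ x y ω, τ (x + y) ω = τ x (τ y ω)
  ergodic : ∀ A : Set Ω, MeasurableSet A → (∀ x, τ x ⁻¹' A = A) → P A = 0 ∨ P A = 1
  meas_a : Measurable fun q : ℝ × Ω => a q.1 q.2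
  a_pos : ∀ x ω, 0 < a x ω
  a_le_one : ∀ x ω, a x ω ≤ 1
  a_stat : ∀ x ω, a x ω = a 0 (τ x ω)
  a_sqrt_lip : ∃ κ > (0:ℝ), ∀ x ω, |Real.sqrt (a x ω) - Real.sqrt (a 0 ω)| ≤ κ * |x|
  meas_H : Measurable fun q : ℝ × ℝ × Ω => H q.1 q.2.1 q.2.2
  H_stat : ∀ p x ω, H p x ω = H p 0 (τ x ω)
  GL_cont : Continuous G_L
  GU_cont : Continuous G_U
  GL_even : ∀ p, G_L (-p) = G_L p
  GU_even : ∀ p, G_U (-p) = G_U p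
  GL_mono : MonotoneOn G_L (Ici 0)
  GU_mono : MonotoneOn G_U (Ici 0)
  GL_coercive : Tendsto G_L atTop atTop
  GU_coercive : Tendsto G_U atTop atTop
  H_lower : ∀ p ω, G_L p ≤ H p 0 ω
  H_upper : ∀ p ω, H p 0 ω ≤ G_U p
  H_lip : ∀ R > (0:ℝ), ∃ K > (0:ℝ), ∀ p q ω, |p| ≤ R → |q| ≤ R →
      |H p 0 ω - H q 0 ω| ≤ K * |p - q|
  H_mod : ∀ R > (0:ℝ), ∃ m : ℝ → ℝ, (∀ r, 0 ≤ m r) ∧ MonotoneOn m (Ici 0) ∧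
      Tendsto m (nhdsWithin 0 (Ioi 0)) (nhds 0) ∧
      ∀ p x ω, |p| ≤ R → |H p x ω - H p 0 ω| ≤ m |x|

/-- `f` is a stationary solution of `a(x,ω) f' + H(f,x,ω) = lam`. -/
def StatSol {Ω : Type} [MeasurableSpace Ω] (P : Measure Ω) (τ : ℝ → Ω → Ω)
    (a : ℝ → Ω → ℝ) (H : ℝ → ℝ → Ω → ℝ) (lam : ℝ) (f : ℝ → Ω → ℝ) : Prop :=
  (Measurable fun q : ℝ × Ω => f q.1 q.2) ∧
  (∀ x ω, f x ω = f 0 (τ x ω)) ∧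
  (∀ ω, ContDiff ℝ 1 fun x => f x ω) ∧
  (∀ᵐ ω ∂P, (∃ M, ∀ x, |f x ω| ≤ M) ∧
    ∀ x, a x ω * deriv (fun y => f y ω) x + H (f x ω) x ω = lam)

/-!
Write `w = f₁ - f₂` and assume `λ₂ ≤ λ₁`. Along each path, `w` solves a linear differential
inequality (the Hamiltonians are Lipschitz on the range of bounded solutions), so once `w ≥ 0`
it stays nonnegative to the right. For a stationary field, a sign change from `-` to `+` would
occur at a translation-equivariant random point, which is impossible under a finite invariant
measure; by ergodicity `w` therefore has a.s. the same sign everywhere. The coercivity of `G_L`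
bounds all stationary solutions uniformly, so `w(0, ·)` is integrable with mean zero, hence
vanishes a.s., and so does `w` on all of `ℝ`. The equation at one common path then gives
`λ₁ = λ₂`.
-/

open Real Function

lemma neg_le_of_ode_of_coercive {G α f h : ℝ → ℝ} {lam C M : ℝ}
    (hC : ∀ p ≤ -C, lam + 1 ≤ G p) (hα_pos : ∀ x, 0 < α x) (hα_le : ∀ x, α x ≤ 1)
    (hf : Differentiable ℝ f) (hM : ∀ x, -M ≤ f x)
    (hode : ∀ x, α x * deriv f x + h x = lam) (hGh : ∀ x, G (f x) ≤ h x) (x₀ : ℝ) :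
    -C ≤ f x₀ := by
  by_contra! hx₀
  have hderiv : ∀ y, f y ≤ -C → deriv f y ≤ -1 := fun y hy => by
    nlinarith [hode y, hGh y, hC _ hy, hα_pos y, hα_le y]
  -- below `-C` the solution decreases at rate at least one, so it must fall under `-M`
  set B : ℝ → ℝ := fun y => f x₀ - (y - x₀) / 2
  have hB : ∀ y, HasDerivAt B (-(1 / 2)) y := fun y => by
    simpa using (((hasDerivAt_id y).sub_const x₀).div_const 2).const_sub (f x₀)
  set b := x₀ + 2 * (f x₀ + M + 1)
  have hb : x₀ ≤ b := by linarith [hM x₀]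
  have hfB := image_le_of_deriv_right_lt_deriv_boundary hf.continuous.continuousOn
    (fun y _ => (hf y).hasDerivAt.hasDerivWithinAt) (by simp [B]) hB
    (fun y hy hfy => by
      have : f y ≤ -C := by simp only [hfy, B]; linarith [hy.1]
      linarith [hderiv y this])
    ⟨hb, le_rfl⟩
  simp only [B, b] at hfB
  linarith [hM b]

lemma abs_le_of_ode_of_coercive {G α f h : ℝ → ℝ} {lam C M : ℝ}
    (hC : ∀ p, C ≤ |p| → lam + 1 ≤ G p) (hα_pos : ∀ x, 0 < α x) (hα_le : ∀ x, α x ≤ 1)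
    (hf : Differentiable ℝ f) (hM : ∀ x, |f x| ≤ M)
    (hode : ∀ x, α x * deriv f x + h x = lam) (hGh : ∀ x, G (f x) ≤ h x) (x : ℝ) :
    |f x| ≤ C := by
  refine abs_le.mpr ⟨neg_le_of_ode_of_coercive
    (fun p hp => hC p (le_abs.mpr (Or.inr (by linarith)))) hα_pos hα_le hf
    (fun y => (abs_le.mp (hM y)).1) hode hGh x, ?_⟩
  · -- the reflection `y ↦ -f (-y)` solves the same kind of equation with `G (-·)`
    have hderiv : ∀ y, deriv (fun y => -f (-y)) y = deriv f (-y) := fun y => by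
      rw [deriv.fun_neg, deriv_comp_neg, neg_neg]
    have := neg_le_of_ode_of_coercive (G := fun p => G (-p)) (α := fun y => α (-y))
      (f := fun y => -f (-y)) (h := fun y => h (-y)) (lam := lam) (M := M)
      (fun p hp => hC _ (by rw [abs_neg]; exact le_abs.mpr (Or.inr (by linarith))))
      (fun y => hα_pos _) (fun y => hα_le _) (hf.comp differentiable_neg).neg
      (fun y => by simpa using (abs_le.mp (hM (-y))).2)
      (fun y => by rw [hderiv]; exact hode _) (fun y => by simpa using hGh (-y)) (-x)
    simp only [neg_neg] at this
    linarith

lemma mul_exp_le_of_mul_le_deriv {w : ℝ → ℝ} {L s x : ℝ} (hw : Differentiable ℝ w)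
    (hsx : s ≤ x) (hder : ∀ y ∈ Ioo s x, L * w y ≤ deriv w y) :
    w s * exp (L * (x - s)) ≤ w x := by
  set g : ℝ → ℝ := fun y => w y * exp (-(L * y))
  have hg : ∀ y, HasDerivAt g (deriv w y * exp (-(L * y)) + w y * (exp (-(L * y)) * -(L * 1))) y :=
    fun y => (hw y).hasDerivAt.mul (((hasDerivAt_id y).const_mul L).neg.exp)
  have hmono : MonotoneOn g (Icc s x) := by
    refine monotoneOn_of_deriv_nonneg (convex_Icc s x)
      (fun y _ => (hg y).continuousAt.continuousWithinAt)
      (fun y _ => (hg y).differentiableAt.differentiableWithinAt) fun y hy => ?_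
    rw [interior_Icc] at hy
    rw [(hg y).deriv]
    nlinarith [hder y hy, exp_pos (-(L * y))]
  have hgsx := hmono ⟨le_rfl, hsx⟩ ⟨hsx, le_rfl⟩ hsx
  have hexp : exp (L * (x - s)) = exp (-(L * s)) * exp (L * x) := by
    rw [← exp_add]; ring_nf
  calc w s * exp (L * (x - s)) = g s * exp (L * x) := by rw [hexp]; ring
    _ ≤ g x * exp (L * x) := mul_le_mul_of_nonneg_right hgsx (exp_pos _).le
    _ = w x := by simp only [g, mul_assoc, ← exp_add, neg_add_cancel, exp_zero, mul_one]

lemma nonneg_of_mul_le_mul_deriv {α w : ℝ → ℝ} {K : ℝ} (hK : 0 ≤ K)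
    (hα_pos : ∀ x, 0 < α x) (hα : Continuous α) (hw : Differentiable ℝ w)
    (hder : ∀ x, w x ≤ 0 → K * w x ≤ α x * deriv w x)
    {x₀ x : ℝ} (hx : x₀ ≤ x) (h₀ : 0 ≤ w x₀) : 0 ≤ w x := by
  by_contra! hwx
  obtain ⟨s, ⟨hs, hws⟩, hs_max⟩ : ∃ s, IsGreatest {y ∈ Icc x₀ x | 0 ≤ w y} s :=
    ((isCompact_Icc.inter_right (isClosed_le continuous_const hw.continuous))).exists_isGreatest
      ⟨x₀, ⟨le_rfl, hx⟩, h₀⟩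
  have hneg : ∀ y ∈ Ioo s x, w y < 0 := fun y hy => by
    by_contra! hy'
    exact (hy.1.trans_le (hs_max ⟨⟨hs.1.trans hy.1.le, hy.2.le⟩, hy'⟩)).false
  obtain ⟨y₀, -, hy₀⟩ := isCompact_Icc.exists_isMinOn (nonempty_Icc.mpr hs.2) hα.continuousOn
  -- on `(s, x)` we have `w < 0`, so `α ≥ α y₀` turns the bound into `w' ≥ (K / α y₀) w`
  have hlin : ∀ y ∈ Ioo s x, K / α y₀ * w y ≤ deriv w y := fun y hy => by
    have hKw := hder y (hneg y hy).le
    rcases le_or_gt 0 (deriv w y) with hd | hd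
    · exact (mul_nonpos_of_nonneg_of_nonpos (div_nonneg hK (hα_pos y₀).le)
        (hneg y hy).le).trans hd
    · have hαy : α y₀ ≤ α y := hy₀ ⟨hy.1.le, hy.2.le⟩
      rw [div_mul_eq_mul_div, div_le_iff₀ (hα_pos y₀)]
      nlinarith
  have := mul_exp_le_of_mul_le_deriv hw hs.2 hlin
  nlinarith [exp_pos (K / α y₀ * (x - s))]

lemma sub_nonneg_of_ode_comparison {lam₁ lam₂ K : ℝ} {α f₁ f₂ h₁ h₂ : ℝ → ℝ} (hK : 0 ≤ K)
    (hlam : lam₂ ≤ lam₁) (hα_pos : ∀ x, 0 < α x) (hα : Continuous α)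
    (hf₁ : Differentiable ℝ f₁) (hf₂ : Differentiable ℝ f₂)
    (hode₁ : ∀ x, α x * deriv f₁ x + h₁ x = lam₁) (hode₂ : ∀ x, α x * deriv f₂ x + h₂ x = lam₂)
    (hlip : ∀ x, |h₁ x - h₂ x| ≤ K * |f₁ x - f₂ x|)
    {x₀ x : ℝ} (hx : x₀ ≤ x) (h₀ : 0 ≤ f₁ x₀ - f₂ x₀) : 0 ≤ f₁ x - f₂ x := by
  refine nonneg_of_mul_le_mul_deriv (w := fun y => f₁ y - f₂ y) hK hα_pos hα (hf₁.sub hf₂)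
    (fun y hy => ?_) hx h₀
  rw [deriv_fun_sub (hf₁ y) (hf₂ y)]
  have := (abs_le.mp (hlip y)).2
  rw [abs_of_nonpos hy] at this
  nlinarith [hode₁ y, hode₂ y]

section StationaryField

variable {Ω : Type*} {τ : ℝ → Ω → Ω} {w : ℝ → Ω → ℝ}

lemma preimage_setOf_exists_eq (hw : ∀ x y ω, w x (τ y ω) = w (x + y) ω) (p : ℝ → Prop)
    (y : ℝ) : τ y ⁻¹' {ω | ∃ x, p (w x ω)} = {ω | ∃ x, p (w x ω)} := by
  ext ω
  simp only [mem_preimage, mem_ofPred_eq, hw]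
  exact ⟨fun ⟨x, hx⟩ => ⟨x + y, hx⟩, fun ⟨x, hx⟩ => ⟨x - y, by rwa [sub_add_cancel]⟩⟩

variable [MeasurableSpace Ω] {P : Measure Ω}

lemma measurableSet_exists_mem_of_isOpen (hw_cont : ∀ ω, Continuous fun x => w x ω)
    (hw_meas : ∀ x, Measurable (w x)) {O : Set (ℝ × ℝ)} (hO : IsOpen O) :
    MeasurableSet {ω | ∃ x, (x, w x ω) ∈ O} := by
  have : {ω | ∃ x, (x, w x ω) ∈ O} = ⋃ q : ℚ, {ω | ((q : ℝ), w q ω) ∈ O} := by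
    ext ω
    simp only [mem_ofPred_eq, mem_iUnion]
    refine ⟨fun ⟨x, hx⟩ => ?_, fun ⟨q, hq⟩ => ⟨q, hq⟩⟩
    obtain ⟨q, hq⟩ := Rat.denseRange_cast.exists_mem_open
      (hO.preimage (continuous_id.prodMk (hw_cont ω))) ⟨x, hx⟩
    exact ⟨q, hq⟩
  rw [this]
  exact MeasurableSet.iUnion fun q =>
    (measurable_const.prodMk (hw_meas q)) hO.measurableSet

lemma measure_iUnion_eq_zero_of_measure_eq {ι : Type*} [Countable ι] [Infinite ι]
    [IsFiniteMeasure P] {D : ι → Set Ω} (hmeas : ∀ i, MeasurableSet (D i))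
    (hdisj : Pairwise (Disjoint on D)) (heq : ∀ i j, P (D i) = P (D j)) :
    P (⋃ i, D i) = 0 := by
  obtain ⟨i₀⟩ := (inferInstance : Nonempty ι)
  have hunion : P (⋃ i, D i) = ∑' _ : ι, P (D i₀) := by
    rw [measure_iUnion hdisj hmeas]
    exact tsum_congr fun i => heq i i₀
  by_cases h : P (D i₀) = 0
  · simp [hunion, h]
  · exact absurd (hunion ▸ measure_ne_top P _) (by simp [ENNReal.tsum_const_eq_top_of_ne_zero h])

lemma ae_not_sign_change [IsFiniteMeasure P] (hτ : ∀ x, MeasurePreserving (τ x) P P)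
    (hw : ∀ x y ω, w x (τ y ω) = w (x + y) ω) (hw_cont : ∀ ω, Continuous fun x => w x ω)
    (hw_meas : ∀ x, Measurable (w x))
    (hup : ∀ᵐ ω ∂P, ∀ x y, x ≤ y → 0 ≤ w x ω → 0 ≤ w y ω) :
    ∀ᵐ ω ∂P, ¬((∃ x, 0 < w x ω) ∧ ∃ x, w x ω < 0) := by
  -- `D n`: the sign switches in `[n, n + 1)`. These are disjoint translates of `D 0`, hence null.
  set D : ℤ → Set Ω := fun n => {ω | ∀ x < (n : ℝ), w x ω ≤ 0} ∩ {ω | ∃ x < (n : ℝ) + 1, 0 < w x ω}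
  have hmeas : ∀ n, MeasurableSet (D n) := fun n => by
    have hopen : ∀ c : ℝ, IsOpen {p : ℝ × ℝ | p.1 < c ∧ 0 < p.2} := fun c =>
      (isOpen_lt continuous_fst continuous_const).inter (isOpen_lt continuous_const continuous_snd)
    have h₁ := (measurableSet_exists_mem_of_isOpen hw_cont hw_meas (hopen n)).compl
    have h₂ := measurableSet_exists_mem_of_isOpen hw_cont hw_meas (hopen (n + 1))
    convert h₁.inter h₂ using 2
    · ext ω; simp
    · ext ω; simp
  have hdisj : Pairwise (Disjoint on D) := by
    suffices ∀ m n : ℤ, m < n → Disjoint (D m) (D n) from fun m n hmn =>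
      hmn.lt_or_gt.elim (this m n) fun h => (this n m h).symm
    intro m n hmn
    refine disjoint_left.mpr fun ω ⟨_, x, hx, hpos⟩ ⟨hnonpos, _⟩ => ?_
    have : (m : ℝ) + 1 ≤ n := by exact_mod_cast hmn
    exact (hpos.trans_le (hnonpos x (by linarith))).false
  have hshift : ∀ n : ℤ, τ n ⁻¹' D 0 = D n := fun n => by
    ext ω
    simp only [D, mem_preimage, mem_inter_iff, mem_ofPred_eq, hw, Int.cast_zero, zero_add]
    refine and_congr ⟨fun h x hx => ?_, fun h x hx => h _ (by linarith)⟩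
      ⟨fun ⟨x, hx, hpos⟩ => ⟨x + n, by linarith, hpos⟩,
        fun ⟨x, hx, hpos⟩ => ⟨x - n, by linarith, ?_⟩⟩
    · simpa using h (x - n) (by linarith)
    · rwa [sub_add_cancel]
  have hnull : P (⋃ n, D n) = 0 := measure_iUnion_eq_zero_of_measure_eq hmeas hdisj fun m n => by
    rw [← hshift m, ← hshift n, (hτ m).measure_preimage (hmeas 0).nullMeasurableSet,
      (hτ n).measure_preimage (hmeas 0).nullMeasurableSet]
  filter_upwards [hup, measure_eq_zero_iff_ae_notMem.mp hnull] with ω hω hD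
  rintro ⟨⟨xp, hxp⟩, ⟨xn, hxn⟩⟩
  refine hD (mem_iUnion.mpr ?_)
  -- the last integer `n` before which `w` is nonpositive
  have hbelow : ∀ x ≤ xn, w x ω ≤ 0 := fun x hx => by
    by_contra! h; exact (hxn.trans_le (hω x xn hx h.le)).false
  have hbdd : ∀ n : ℤ, (∀ x < (n : ℝ), w x ω ≤ 0) → n ≤ ⌈xp⌉ := fun n hn => by
    by_contra! h
    have : xp < n := (Int.le_ceil xp).trans_lt (by exact_mod_cast h)
    exact (hxp.trans_le (hn xp this)).false
  obtain ⟨n, hn, hmax⟩ := Int.exists_greatest_of_bdd ⟨_, hbdd⟩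
    ⟨⌊xn⌋, fun x hx => hbelow x (hx.le.trans (Int.floor_le xn))⟩
  refine ⟨n, hn, ?_⟩
  by_contra h
  simp only [mem_ofPred_eq, not_exists, not_and, not_lt] at h
  exact (hmax (n + 1) (by exact_mod_cast h)).not_gt (lt_add_one n)

lemma ae_nonpos_or_ae_nonneg [IsProbabilityMeasure P] (hτ : ∀ x, MeasurePreserving (τ x) P P)
    (herg : ∀ A, MeasurableSet A → (∀ x, τ x ⁻¹' A = A) → P A = 0 ∨ P A = 1)
    (hw : ∀ x y ω, w x (τ y ω) = w (x + y) ω) (hw_cont : ∀ ω, Continuous fun x => w x ω)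
    (hw_meas : ∀ x, Measurable (w x))
    (hup : ∀ᵐ ω ∂P, ∀ x y, x ≤ y → 0 ≤ w x ω → 0 ≤ w y ω) :
    (∀ᵐ ω ∂P, ∀ x, w x ω ≤ 0) ∨ ∀ᵐ ω ∂P, ∀ x, 0 ≤ w x ω := by
  have hU := measurableSet_exists_mem_of_isOpen hw_cont hw_meas
    (O := {p | 0 < p.2}) (isOpen_lt continuous_const continuous_snd)
  have hV := measurableSet_exists_mem_of_isOpen hw_cont hw_meas
    (O := {p | p.2 < 0}) (isOpen_lt continuous_snd continuous_const)
  rcases herg _ hU (preimage_setOf_exists_eq hw (0 < ·)) with hU0 | hU1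
  · left
    filter_upwards [measure_eq_zero_iff_ae_notMem.mp hU0] with ω hω
    simpa using hω
  rcases herg _ hV (preimage_setOf_exists_eq hw (· < 0)) with hV0 | hV1
  · right
    filter_upwards [measure_eq_zero_iff_ae_notMem.mp hV0] with ω hω
    simpa using hω
  have hUV : ∀ᵐ ω ∂P, (∃ x, 0 < w x ω) ∧ ∃ x, w x ω < 0 :=
    (ae_iff_measure_eq hU.nullMeasurableSet |>.mpr (by simpa using hU1)).and
      (ae_iff_measure_eq hV.nullMeasurableSet |>.mpr (by simpa using hV1))
  obtain ⟨ω, hω, hnot⟩ := (hUV.and (ae_not_sign_change hτ hw hw_cont hw_meas hup)).exists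
  exact absurd hω hnot

lemma ae_forall_eq_zero_of_ae_eq_zero (hτ : ∀ x, MeasurePreserving (τ x) P P)
    (hw : ∀ x y ω, w x (τ y ω) = w (x + y) ω) (hw_cont : ∀ ω, Continuous fun x => w x ω)
    (h₀ : ∀ᵐ ω ∂P, w 0 ω = 0) : ∀ᵐ ω ∂P, ∀ x, w x ω = 0 := by
  have hrat : ∀ᵐ ω ∂P, ∀ q : ℚ, w q ω = 0 := ae_all_iff.mpr fun q => by
    simpa [hw] using (hτ q).quasiMeasurePreserving.tendsto_ae.eventually h₀
  filter_upwards [hrat] with ω hω x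
  exact congrFun (Continuous.ext_on Rat.denseRange_cast (hw_cont ω) continuous_const
    (by rintro _ ⟨q, rfl⟩; exact hω q)) x

lemma ae_forall_eq_zero_of_integral_eq_zero [IsProbabilityMeasure P]
    (hτ : ∀ x, MeasurePreserving (τ x) P P)
    (herg : ∀ A, MeasurableSet A → (∀ x, τ x ⁻¹' A = A) → P A = 0 ∨ P A = 1)
    (hw : ∀ x y ω, w x (τ y ω) = w (x + y) ω) (hw_cont : ∀ ω, Continuous fun x => w x ω)
    (hw_meas : ∀ x, Measurable (w x))
    (hup : ∀ᵐ ω ∂P, ∀ x y, x ≤ y → 0 ≤ w x ω → 0 ≤ w y ω)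
    (hint : Integrable (w 0) P) (hmean : ∫ ω, w 0 ω ∂P = 0) :
    ∀ᵐ ω ∂P, ∀ x, w x ω = 0 := by
  refine ae_forall_eq_zero_of_ae_eq_zero hτ hw hw_cont ?_
  rcases ae_nonpos_or_ae_nonneg hτ herg hw hw_cont hw_meas hup with hsign | hsign
  · have hneg : ∫ ω, -w 0 ω ∂P = 0 := by rw [integral_neg, hmean, neg_zero]
    filter_upwards [(integral_eq_zero_iff_of_nonneg_ae
      (hsign.mono fun ω h => neg_nonneg.mpr (h 0)) hint.neg).mp hneg] with ω hω
    exact neg_eq_zero.mp hω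
  · exact (integral_eq_zero_iff_of_nonneg_ae (hsign.mono fun ω h => h 0) hint).mp hmean

end StationaryField

lemma apply_shift_of_stationary {Ω β : Type*} {τ : ℝ → Ω → Ω}
    (hτ : ∀ x y ω, τ (x + y) ω = τ x (τ y ω)) {g : ℝ → Ω → β}
    (hg : ∀ x ω, g x ω = g 0 (τ x ω)) (x y : ℝ) (ω : Ω) : g x (τ y ω) = g (x + y) ω := by
  rw [hg, ← hτ, ← hg]

namespace HJSetting

variable {Ω : Type} [MeasurableSpace Ω] {P : Measure Ω} {τ : ℝ → Ω → Ω} {a : ℝ → Ω → ℝ}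
  {H : ℝ → ℝ → Ω → ℝ} {G_L G_U : ℝ → ℝ}

lemma continuous_a (hset : HJSetting P τ a H G_L G_U) (ω : Ω) : Continuous fun x => a x ω := by
  obtain ⟨κ, hκ, hlip⟩ := hset.a_sqrt_lip
  have hsqrt : LipschitzWith ⟨κ, hκ.le⟩ fun x => Real.sqrt (a x ω) :=
    LipschitzWith.of_dist_le_mul fun x y => by
      have := hlip (x - y) (τ y ω)
      rwa [apply_shift_of_stationary hset.tau_add hset.a_stat, sub_add_cancel,
        ← hset.a_stat] at this
  have ha : (fun x => a x ω) = fun x => Real.sqrt (a x ω) ^ 2 :=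
    funext fun x => (Real.sq_sqrt (hset.a_pos x ω).le).symm
  rw [ha]
  exact hsqrt.continuous.pow 2

lemma abs_H_sub_le (hset : HJSetting P τ a H G_L G_U) {R : ℝ} (hR : 0 < R) :
    ∃ K > 0, ∀ p q x ω, |p| ≤ R → |q| ≤ R → |H p x ω - H q x ω| ≤ K * |p - q| := by
  obtain ⟨K, hK, hlip⟩ := hset.H_lip R hR
  exact ⟨K, hK, fun p q x ω hp hq => by rw [hset.H_stat p, hset.H_stat q]; exact hlip _ _ _ hp hq⟩

lemma G_L_le_H (hset : HJSetting P τ a H G_L G_U) (p x : ℝ) (ω : Ω) : G_L p ≤ H p x ω := by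
  rw [hset.H_stat]
  exact hset.H_lower p _

lemma exists_add_one_le_G_L (hset : HJSetting P τ a H G_L G_U) (lam : ℝ) :
    ∃ C, ∀ p, C ≤ |p| → lam + 1 ≤ G_L p := by
  obtain ⟨C, hC⟩ := (hset.GL_coercive.eventually_ge_atTop (lam + 1)).exists_forall_of_atTop
  refine ⟨C, fun p hp => ?_⟩
  rcases abs_choice p with h | h <;> rw [h] at hp
  · exact hC p hp
  · exact hset.GL_even p ▸ hC (-p) hp

end HJSetting

namespace StatSol

variable {Ω : Type} [MeasurableSpace Ω] {P : Measure Ω} {τ : ℝ → Ω → Ω} {a : ℝ → Ω → ℝ}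
  {H : ℝ → ℝ → Ω → ℝ} {G_L G_U : ℝ → ℝ} {lam lam₁ lam₂ : ℝ} {f f₁ f₂ : ℝ → Ω → ℝ}

lemma measurable_apply (hf : StatSol P τ a H lam f) (x : ℝ) : Measurable (f x) :=
  hf.1.comp (measurable_const.prodMk measurable_id)

lemma differentiable (hf : StatSol P τ a H lam f) (ω : Ω) : Differentiable ℝ fun x => f x ω :=
  (hf.2.2.1 ω).differentiable one_ne_zero

lemma ae_abs_le (hset : HJSetting P τ a H G_L G_U) (hf : StatSol P τ a H lam f) :
    ∃ C, ∀ᵐ ω ∂P, ∀ x, |f x ω| ≤ C := by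
  obtain ⟨C, hC⟩ := hset.exists_add_one_le_G_L lam
  refine ⟨C, ?_⟩
  filter_upwards [hf.2.2.2] with ω ⟨⟨M, hM⟩, hode⟩ x
  exact abs_le_of_ode_of_coercive hC (fun x => hset.a_pos x ω) (fun x => hset.a_le_one x ω)
    (hf.differentiable ω) hM hode (fun x => hset.G_L_le_H _ x ω) x

lemma integrable (hset : HJSetting P τ a H G_L G_U) (hf : StatSol P τ a H lam f) :
    Integrable (f 0) P := by
  have := hset.prob
  obtain ⟨C, hC⟩ := hf.ae_abs_le hset
  exact .of_bound (hf.measurable_apply 0).aestronglyMeasurable C (hC.mono fun ω h => h 0)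

lemma ae_sub_nonneg_propagates (hset : HJSetting P τ a H G_L G_U)
    (hf₁ : StatSol P τ a H lam₁ f₁) (hf₂ : StatSol P τ a H lam₂ f₂) (hlam : lam₂ ≤ lam₁) :
    ∀ᵐ ω ∂P, ∀ x y, x ≤ y → 0 ≤ f₁ x ω - f₂ x ω → 0 ≤ f₁ y ω - f₂ y ω := by
  filter_upwards [hf₁.2.2.2, hf₂.2.2.2] with ω ⟨⟨M₁, hM₁⟩, hode₁⟩ ⟨⟨M₂, hM₂⟩, hode₂⟩ x y hxy
  obtain ⟨K, hK, hlip⟩ := hset.abs_H_sub_le (R := max (max M₁ M₂) 1) (by positivity)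
  exact sub_nonneg_of_ode_comparison hK.le hlam (fun x => hset.a_pos x ω) (hset.continuous_a ω)
    (hf₁.differentiable ω) (hf₂.differentiable ω) hode₁ hode₂
    (fun x => hlip _ _ x ω ((hM₁ x).trans (by simp)) ((hM₂ x).trans (by simp))) hxy

lemma ae_eq_of_integral_eq_of_le (hset : HJSetting P τ a H G_L G_U) (hf₁ : StatSol P τ a H lam₁ f₁)
    (hf₂ : StatSol P τ a H lam₂ f₂) (hmean : ∫ ω, f₁ 0 ω ∂P = ∫ ω, f₂ 0 ω ∂P)
    (hlam : lam₂ ≤ lam₁) : ∀ᵐ ω ∂P, ∀ x, f₁ x ω = f₂ x ω := by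
  have := hset.prob
  have hzero := ae_forall_eq_zero_of_integral_eq_zero (w := fun x ω => f₁ x ω - f₂ x ω)
    hset.mp_tau hset.ergodic
    (fun x y ω => by simp only [apply_shift_of_stationary hset.tau_add hf₁.2.1,
      apply_shift_of_stationary hset.tau_add hf₂.2.1])
    (fun ω => ((hf₁.differentiable ω).sub (hf₂.differentiable ω)).continuous)
    (fun x => (hf₁.measurable_apply x).sub (hf₂.measurable_apply x))
    (hf₁.ae_sub_nonneg_propagates hset hf₂ hlam)
    ((hf₁.integrable hset).sub (hf₂.integrable hset))
    (by rw [integral_sub (hf₁.integrable hset) (hf₂.integrable hset), hmean, sub_self])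
  filter_upwards [hzero] with ω hω x
  exact sub_eq_zero.mp (hω x)

lemma eq_of_ae_eq (hset : HJSetting P τ a H G_L G_U) (hf₁ : StatSol P τ a H lam₁ f₁)
    (hf₂ : StatSol P τ a H lam₂ f₂) (heq : ∀ᵐ ω ∂P, ∀ x, f₁ x ω = f₂ x ω) : lam₁ = lam₂ := by
  have := hset.prob
  obtain ⟨ω, ⟨-, hode₁⟩, ⟨-, hode₂⟩, hω⟩ := (hf₁.2.2.2.and (hf₂.2.2.2.and heq)).exists
  have hfun : (fun x => f₁ x ω) = fun x => f₂ x ω := funext hω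
  rw [← hode₁ 0, ← hode₂ 0, hfun, hω 0]

end StatSol

theorem stationary_solution_unique_given_mean
    {Ω : Type} [MeasurableSpace Ω] (P : Measure Ω) (τ : ℝ → Ω → Ω)
    (a : ℝ → Ω → ℝ) (H : ℝ → ℝ → Ω → ℝ) (G_L G_U : ℝ → ℝ)
    (hset : HJSetting P τ a H G_L G_U)
    (lam₁ lam₂ : ℝ) (f₁ f₂ : ℝ → Ω → ℝ)
    (hf₁ : StatSol P τ a H lam₁ f₁) (hf₂ : StatSol P τ a H lam₂ f₂)
    (hmean : (∫ ω, f₁ 0 ω ∂P) = ∫ ω, f₂ 0 ω ∂P) :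
    lam₁ = lam₂ ∧ ∀ᵐ ω ∂P, ∀ x, f₁ x ω = f₂ x ω := by
  have hae : ∀ᵐ ω ∂P, ∀ x, f₁ x ω = f₂ x ω := by
    rcases le_total lam₂ lam₁ with hle | hle
    · exact hf₁.ae_eq_of_integral_eq_of_le hset hf₂ hmean hle
    · filter_upwards [hf₂.ae_eq_of_integral_eq_of_le hset hf₁ hmean.symm hle] with ω hω x using (hω x).symm
  exact ⟨hf₁.eq_of_ae_eq hset hf₂ hae, hae⟩
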